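/- arXiv:1605.00641 — 2 statements merged into one kernel-verified Lean document; each statement's English description precedes it below -/
import Mathlib

section
/- For 1 ≤ p < ∞ with p ≠ 2, every linear isometry T : ℓᵖ → ℓᵖ preserves disjointness of support: if f and g are disjointly supported, then T(f) and T(g) are disjointly supported. -/
open scoped ENNReal
open Filter

noncomputable section

abbrev ellp (p : ℝ≥0∞) := lp (fun _ : ℕ => ℂ) p

/-- the standard basis vector `e n` -/
noncomputable def stdb (p : ℝ≥0∞) (n : ℕ) : ellp p := lp.single p n 1

/-- `f` and `g` are disjointly supported -/
def DisjSupp {p : ℝ≥0∞} (f g : ellp p) : Prop := ∀ n : ℕ, f n = 0 ∨ g n = 0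

/-- the subvector relation: `f = g · χ_A` for some `A ⊆ ℕ` -/
def Subvec {p : ℝ≥0∞} (f g : ellp p) : Prop :=
  ∃ A : Set ℕ, ⇑f = A.indicator ⇑g

/-- strict subadditivity of `x ↦ x^r` for `0 < r < 1` -/
lemma hl_strict_subadd {r s t : ℝ} (hr1 : r < 1) (hs : 0 < s) (ht : 0 < t) :
    (s + t) ^ r < s ^ r + t ^ r := by
  have hst : 0 < s + t := by linarith
  have h1 : (s + t) ^ (r - 1) < s ^ (r - 1) :=
    Real.rpow_lt_rpow_of_neg hs (by linarith) (by linarith)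
  have h2 : (s + t) ^ (r - 1) < t ^ (r - 1) :=
    Real.rpow_lt_rpow_of_neg ht (by linarith) (by linarith)
  have key : (s + t) ^ r = s * (s + t) ^ (r - 1) + t * (s + t) ^ (r - 1) := by
    rw [← add_mul,
      show (s+t) * (s+t) ^ (r-1) = (s+t)^(1:ℝ) * (s+t)^(r-1) by rw [Real.rpow_one],
      ← Real.rpow_add hst]
    ring_nf
  have e1 : s * s ^ (r - 1) = s ^ r := by
    rw [show s * s ^ (r-1) = s^(1:ℝ) * s^(r-1) by rw [Real.rpow_one], ← Real.rpow_add hs]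
    ring_nf
  have e2 : t * t ^ (r - 1) = t ^ r := by
    rw [show t * t ^ (r-1) = t^(1:ℝ) * t^(r-1) by rw [Real.rpow_one], ← Real.rpow_add ht]
    ring_nf
  rw [key, ← e1, ← e2]
  have := mul_lt_mul_of_pos_left h1 hs
  have := mul_lt_mul_of_pos_left h2 ht
  linarith

/-- strict superadditivity of `x ↦ x^r` for `r > 1` -/
lemma hl_strict_superadd {r s t : ℝ} (hr : 1 < r) (hs : 0 < s) (ht : 0 < t) :
    s ^ r + t ^ r < (s + t) ^ r := by
  have hst : 0 < s + t := by linarith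
  have h1 : s ^ (r - 1) < (s + t) ^ (r - 1) :=
    Real.rpow_lt_rpow hs.le (by linarith) (by linarith)
  have h2 : t ^ (r - 1) < (s + t) ^ (r - 1) :=
    Real.rpow_lt_rpow ht.le (by linarith) (by linarith)
  have key : (s + t) ^ r = s * (s + t) ^ (r - 1) + t * (s + t) ^ (r - 1) := by
    rw [← add_mul,
      show (s+t) * (s+t) ^ (r-1) = (s+t)^(1:ℝ) * (s+t)^(r-1) by rw [Real.rpow_one],
      ← Real.rpow_add hst]
    ring_nf
  have e1 : s * s ^ (r - 1) = s ^ r := by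
    rw [show s * s ^ (r-1) = s^(1:ℝ) * s^(r-1) by rw [Real.rpow_one], ← Real.rpow_add hs]
    ring_nf
  have e2 : t * t ^ (r - 1) = t ^ r := by
    rw [show t * t ^ (r-1) = t^(1:ℝ) * t^(r-1) by rw [Real.rpow_one], ← Real.rpow_add ht]
    ring_nf
  rw [key, ← e1, ← e2]
  have := mul_lt_mul_of_pos_left h1 hs
  have := mul_lt_mul_of_pos_left h2 ht
  linarith

lemma hl_norm_rpow_eq (q : ℝ) (x : ℂ) : ‖x‖ ^ q = (‖x‖ ^ 2) ^ (q / 2) := by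
  rw [← Real.rpow_natCast ‖x‖ 2, ← Real.rpow_mul (norm_nonneg x),
    show ((2:ℕ):ℝ) * (q/2) = q by push_cast; ring]

lemma hl_parallelogram (a b : ℂ) : ‖a + b‖^2 + ‖a - b‖^2 = 2 * (‖a‖^2 + ‖b‖^2) := by
  simpa [sq] using parallelogram_law_with_norm ℝ a b

/-- Hanner/Clarkson strict pointwise inequality, `q < 2`. -/
lemma hl_key_lt {q : ℝ} (hq1 : 1 ≤ q) (hq2 : q < 2) {a b : ℂ} (ha : a ≠ 0) (hb : b ≠ 0) :
    ‖a + b‖ ^ q + ‖a - b‖ ^ q < 2 * (‖a‖ ^ q + ‖b‖ ^ q) := by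
  set r := q / 2 with hr
  have hr0 : 0 < r := by rw [hr]; linarith
  have hr1 : r < 1 := by rw [hr]; linarith
  have hu : (0:ℝ) ≤ ‖a+b‖^2 := by positivity
  have hv : (0:ℝ) ≤ ‖a-b‖^2 := by positivity
  have hs : (0:ℝ) < ‖a‖^2 := pow_pos (norm_pos_iff.2 ha) 2
  have ht : (0:ℝ) < ‖b‖^2 := pow_pos (norm_pos_iff.2 hb) 2
  have hmid : (‖a+b‖^2) ^ r + (‖a-b‖^2) ^ r ≤ 2 * (((‖a+b‖^2) + (‖a-b‖^2)) / 2) ^ r := by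
    have := (Real.concaveOn_rpow hr0.le hr1.le).2 (Set.mem_Ici.2 hu) (Set.mem_Ici.2 hv)
      (by norm_num : (0:ℝ) ≤ 1/2) (by norm_num : (0:ℝ) ≤ 1/2) (by norm_num)
    simp only [smul_eq_mul] at this
    rw [show ((‖a+b‖^2) + (‖a-b‖^2)) / 2 = 1/2*(‖a+b‖^2) + 1/2*(‖a-b‖^2) by ring]
    linarith
  have hpar : ((‖a+b‖^2) + (‖a-b‖^2)) / 2 = ‖a‖^2 + ‖b‖^2 := by
    rw [hl_parallelogram a b]; ring
  have hsub : ((‖a‖^2) + (‖b‖^2)) ^ r < (‖a‖^2) ^ r + (‖b‖^2) ^ r :=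
    hl_strict_subadd hr1 hs ht
  rw [hl_norm_rpow_eq q (a+b), hl_norm_rpow_eq q (a-b), hl_norm_rpow_eq q a,
    hl_norm_rpow_eq q b, ← hr]
  rw [hpar] at hmid
  linarith

/-- Hanner/Clarkson strict pointwise inequality, `q > 2`. -/
lemma hl_key_gt {q : ℝ} (hq2 : 2 < q) {a b : ℂ} (ha : a ≠ 0) (hb : b ≠ 0) :
    2 * (‖a‖ ^ q + ‖b‖ ^ q) < ‖a + b‖ ^ q + ‖a - b‖ ^ q := by
  set r := q / 2 with hr
  have hr1 : 1 < r := by rw [hr]; linarith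
  have hu : (0:ℝ) ≤ ‖a+b‖^2 := by positivity
  have hv : (0:ℝ) ≤ ‖a-b‖^2 := by positivity
  have hs : (0:ℝ) < ‖a‖^2 := pow_pos (norm_pos_iff.2 ha) 2
  have ht : (0:ℝ) < ‖b‖^2 := pow_pos (norm_pos_iff.2 hb) 2
  have hmid : 2 * (((‖a+b‖^2) + (‖a-b‖^2)) / 2) ^ r ≤ (‖a+b‖^2) ^ r + (‖a-b‖^2) ^ r := by
    have := (convexOn_rpow hr1.le).2 (Set.mem_Ici.2 hu) (Set.mem_Ici.2 hv)
      (by norm_num : (0:ℝ) ≤ 1/2) (by norm_num : (0:ℝ) ≤ 1/2) (by norm_num)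
    simp only [smul_eq_mul] at this
    rw [show ((‖a+b‖^2) + (‖a-b‖^2)) / 2 = 1/2*(‖a+b‖^2) + 1/2*(‖a-b‖^2) by ring]
    linarith
  have hpar : ((‖a+b‖^2) + (‖a-b‖^2)) / 2 = ‖a‖^2 + ‖b‖^2 := by
    rw [hl_parallelogram a b]; ring
  have hsub : (‖a‖^2) ^ r + (‖b‖^2) ^ r < ((‖a‖^2) + (‖b‖^2)) ^ r :=
    hl_strict_superadd hr1 hs ht
  rw [hl_norm_rpow_eq q (a+b), hl_norm_rpow_eq q (a-b), hl_norm_rpow_eq q a,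
    hl_norm_rpow_eq q b, ← hr]
  rw [hpar] at hmid
  linarith

/-- equality case when one of the two vanishes -/
lemma hl_key_eq {q : ℝ} (hq0 : 0 < q) {a b : ℂ} (hab : a = 0 ∨ b = 0) :
    ‖a + b‖ ^ q + ‖a - b‖ ^ q = 2 * (‖a‖ ^ q + ‖b‖ ^ q) := by
  rcases hab with rfl | rfl
  · simp [Real.zero_rpow hq0.ne']; ring
  · simp [Real.zero_rpow hq0.ne']; ring

/-- linear isometries of `ℓᵖ`, `p ≠ 2`, preserve disjointness of support. -/
theorem stmt_3 (p : ℝ≥0∞) [Fact (1 ≤ p)] (hptop : p ≠ ∞) (hp2 : p ≠ 2)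
    (T : ellp p →ₗᵢ[ℂ] ellp p) (f g : ellp p) (h : DisjSupp f g) :
    DisjSupp (T f) (T g) := by
  have hp1 : 1 ≤ p := Fact.out
  set q : ℝ := p.toReal with hqdef
  have hq1 : 1 ≤ q := by
    rw [hqdef, ← ENNReal.toReal_one]
    exact ENNReal.toReal_mono hptop hp1
  have hq0 : 0 < q := by linarith
  have hq2 : q ≠ 2 := by
    intro hc
    apply hp2
    have h2 : p.toReal = (2 : ℝ≥0∞).toReal := by rw [ENNReal.toReal_ofNat]; exact hc
    exact (ENNReal.toReal_eq_toReal_iff' hptop (by norm_num)).1 h2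
  -- norm identity for the original disjointly supported pair
  have norm_formula : ∀ u : ellp p, ‖u‖ ^ q = ∑' n, ‖u n‖ ^ q := fun u =>
    lp.norm_rpow_eq_tsum hq0 u
  have summ : ∀ u : ellp p, Summable fun n => ‖u n‖ ^ q := fun u =>
    (lp.memℓp u).summable hq0
  have hfg : ‖f + g‖ ^ q + ‖f - g‖ ^ q = 2 * (‖f‖ ^ q + ‖g‖ ^ q) := by
    rw [norm_formula, norm_formula, norm_formula, norm_formula]
    have e1 : ∀ n, ‖(f + g) n‖ ^ q + ‖(f - g) n‖ ^ q = 2 * (‖f n‖ ^ q + ‖g n‖ ^ q) := by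
      intro n
      have := hl_key_eq hq0 (h n)
      simpa using this
    calc (∑' n, ‖(f + g) n‖ ^ q) + ∑' n, ‖(f - g) n‖ ^ q
        = ∑' n, (‖(f + g) n‖ ^ q + ‖(f - g) n‖ ^ q) :=
          (Summable.tsum_add (summ (f+g)) (summ (f-g))).symm
      _ = ∑' n, 2 * (‖f n‖ ^ q + ‖g n‖ ^ q) := by
          exact tsum_congr e1
      _ = 2 * ((∑' n, ‖f n‖ ^ q) + ∑' n, ‖g n‖ ^ q) := by
          rw [← Summable.tsum_add (summ f) (summ g), ← tsum_mul_left]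
  -- transfer to T f, T g via the isometry
  set F := T f with hF
  set G := T g with hG
  have hFG : ‖F + G‖ ^ q + ‖F - G‖ ^ q = 2 * (‖F‖ ^ q + ‖G‖ ^ q) := by
    rw [hF, hG, ← map_add, ← map_sub, T.norm_map, T.norm_map, T.norm_map, T.norm_map]
    exact hfg
  -- expand as tsums
  set A : ℕ → ℝ := fun n => ‖(F + G) n‖ ^ q + ‖(F - G) n‖ ^ q with hA
  set B : ℕ → ℝ := fun n => 2 * (‖F n‖ ^ q + ‖G n‖ ^ q) with hB
  have hAsumm : Summable A := (summ (F+G)).add (summ (F-G))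
  have hBsumm : Summable B := by
    have := ((summ F).add (summ G)).mul_left 2
    simpa [hB] using this
  have htsum : ∑' n, A n = ∑' n, B n := by
    rw [hA, hB]
    calc (∑' n, (‖(F + G) n‖ ^ q + ‖(F - G) n‖ ^ q))
        = (∑' n, ‖(F + G) n‖ ^ q) + ∑' n, ‖(F - G) n‖ ^ q :=
          Summable.tsum_add (summ (F+G)) (summ (F-G))
      _ = ‖F + G‖ ^ q + ‖F - G‖ ^ q := by rw [norm_formula, norm_formula]
      _ = 2 * (‖F‖ ^ q + ‖G‖ ^ q) := hFG
      _ = 2 * ((∑' n, ‖F n‖ ^ q) + ∑' n, ‖G n‖ ^ q) := by rw [norm_formula, norm_formula]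
      _ = ∑' n, 2 * (‖F n‖ ^ q + ‖G n‖ ^ q) := by
          rw [← Summable.tsum_add (summ F) (summ G), ← tsum_mul_left]
  -- coordinate expressions
  have coordA : ∀ n, A n = ‖F n + G n‖ ^ q + ‖F n - G n‖ ^ q := by
    intro n; simp [hA]
  -- conclude
  intro n
  by_contra hcon
  push_neg at hcon
  obtain ⟨hFn, hGn⟩ := hcon
  rcases lt_or_gt_of_ne hq2 with hlt | hgt
  · -- q < 2 : A ≤ B pointwise, strict at n
    have hle : ∀ m, A m ≤ B m := by
      intro m
      rw [coordA, hB]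
      rcases eq_or_ne (F m) 0 with h0 | h0
      · exact le_of_eq (hl_key_eq hq0 (Or.inl h0))
      rcases eq_or_ne (G m) 0 with h1 | h1
      · exact le_of_eq (hl_key_eq hq0 (Or.inr h1))
      · exact (hl_key_lt hq1 hlt h0 h1).le
    have hstrict : A n < B n := by
      rw [coordA, hB]; exact hl_key_lt hq1 hlt hFn hGn
    exact absurd htsum (ne_of_lt (Summable.tsum_lt_tsum hle hstrict hAsumm hBsumm))
  · -- q > 2 : B ≤ A pointwise, strict at n
    have hle : ∀ m, B m ≤ A m := by
      intro m
      rw [coordA, hB]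
      rcases eq_or_ne (F m) 0 with h0 | h0
      · exact ge_of_eq (hl_key_eq hq0 (Or.inl h0))
      rcases eq_or_ne (G m) 0 with h1 | h1
      · exact ge_of_eq (hl_key_eq hq0 (Or.inr h1))
      · exact (hl_key_gt hgt h0 h1).le
    have hstrict : B n < A n := by
      rw [coordA, hB]; exact hl_key_gt hgt hFn hGn
    exact absurd htsum (ne_of_gt (Summable.tsum_lt_tsum hle hstrict hBsumm hAsumm))
end
end

section
/- Let ϕ : S → ℓᵖ be a disintegration of ℓᵖ (p ≥ 1, p ≠ 2) and let {Cₙ} be a partition of S into almost norm-maximizing chains. Then the vectors inf ϕ[C₀], inf ϕ[C₁], … are pairwise disjointly supported, and for each j ∈ ℕ there is a unique n such that supp(inf ϕ[Cₙ]) = {j}. -/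
open scoped ENNReal
open Filter

noncomputable section

/-- a tree is a prefix-closed set of finite sequences of naturals -/
def IsTree (S : Set (List ℕ)) : Prop := ∀ ν ∈ S, ∀ ν' : List ℕ, ν' <+: ν → ν' ∈ S

/-- `ν'` is a child of `ν` in `S` -/
def ChildIn (S : Set (List ℕ)) (ν ν' : List ℕ) : Prop :=
  ν' ∈ S ∧ ∃ m : ℕ, ν' = ν ++ [m]

/-- `ν` is a nonterminal node of `S` -/
def Nonterminal (S : Set (List ℕ)) (ν : List ℕ) : Prop := ∃ ν', ChildIn S ν ν'

/-- a disintegration of `ℓᵖ`: injective, never zero, separating, summative, with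
linearly dense range -/
structure Disintegration (p : ℝ≥0∞) [Fact (1 ≤ p)] (S : Set (List ℕ)) (φ : List ℕ → ellp p) : Prop where
  tree : IsTree S
  inj : Set.InjOn φ S
  nonzero : ∀ ν ∈ S, φ ν ≠ 0
  separating : ∀ ν ∈ S, ∀ ν' ∈ S, ¬ν <+: ν' → ¬ν' <+: ν → DisjSupp (φ ν) (φ ν')
  summative : ∀ ν ∈ S, Nonterminal S ν →
    HasSum (fun μ : {μ : List ℕ // ChildIn S ν μ} => φ μ.val) (φ ν)
  dense : Dense (Submodule.span ℂ (φ '' S) : Set (ellp p))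

/-- a chain with respect to the prefix (ancestor) order -/
def PrefixChain (C : Set (List ℕ)) : Prop := ∀ ν ∈ C, ∀ ν' ∈ C, ν <+: ν' ∨ ν' <+: ν

/-- an almost norm-maximizing chain -/
def ANMChain (p : ℝ≥0∞) (S : Set (List ℕ)) (φ : List ℕ → ellp p)
    (C : Set (List ℕ)) : Prop :=
  C ⊆ S ∧ PrefixChain C ∧ ∀ ν ∈ C, Nonterminal S ν →
    ∃ ν', ν' ∈ C ∧ ChildIn S ν ν' ∧ ∀ μ, ChildIn S ν μ →
      ‖φ μ‖ ^ p.toReal ≤ ‖φ ν'‖ ^ p.toReal + 2 ^ (-(ν.length : ℤ))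

/-- `g` is the greatest lower bound of `A` in the subvector order -/
def IsSubvecGLB {p : ℝ≥0∞} (g : ellp p) (A : Set (ellp p)) : Prop :=
  (∀ h ∈ A, Subvec g h) ∧ ∀ g', (∀ h ∈ A, Subvec g' h) → Subvec g' g

/-!
Summativity and separation make the nodes `ν` with `φ ν j ≠ 0` a branch of `S` along which
`φ ν j` is constant, and the infimum of a chain is nonzero at `j` exactly when the chain lies on
that branch. An almost norm-maximizing chain never stops at a nonterminal node, so two such
chains on the branch of `j` meet; this gives disjointness. The support of an infimum has at most
one point: if it contained `j ≠ m`, every node would carry both coordinates with the same values,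
and the functional `g m • eval j - g j • eval m` would vanish on the dense span of `φ`.
Finally, some chain lies on the branch of `j`. If the branch is finite this is the chain of its
leaf. If it is infinite, it leaves its current chain only finitely often: at each such step the
chain's own child takes almost as much `p`-mass as the branch's, so `‖φ ν‖ₚᵖ` nearly halves, while
it stays above `|φ ν j|ᵖ > 0`.
-/

open Topology

lemma exists_seq_of_forall_exists {α : Type*} {P : α → Prop} {R : α → α → Prop}
    (h : ∀ a, P a → ∃ b, R a b ∧ P b) {a₀ : α} (h₀ : P a₀) :
    ∃ f : ℕ → α, ∀ t, P (f t) ∧ R (f t) (f (t + 1)) := by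
  choose F hF using h
  let G : {a // P a} → {a // P a} := fun a => ⟨F a.1 a.2, (hF a.1 a.2).2⟩
  refine ⟨fun t => (G^[t] ⟨a₀, h₀⟩).1, fun t => ⟨(G^[t] ⟨a₀, h₀⟩).2, ?_⟩⟩
  show R (G^[t] _).1 (G^[t + 1] _).1
  rw [Function.iterate_succ_apply']
  exact (hF _ _).1

lemma not_frequently_two_mul_le_add {a δ : ℕ → ℝ} {ε : ℝ} (ha : Antitone a) (hε : 0 < ε)
    (haε : ∀ t, ε ≤ a t) (hδ : Tendsto δ atTop (𝓝 0)) :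
    ¬∃ᶠ t in atTop, 2 * a (t + 1) ≤ a t + δ t := by
  set L := ⨅ t, a t
  have hL : Tendsto a atTop (𝓝 L) := tendsto_atTop_ciInf ha ⟨ε, by simpa [lowerBounds]⟩
  have hlim : Tendsto (fun t => 2 * a (t + 1) - (a t + δ t)) atTop (𝓝 (2 * L - (L + 0))) :=
    ((hL.comp (tendsto_add_atTop_nat 1)).const_mul 2).sub (hL.add hδ)
  have hpos : 0 < 2 * L - (L + 0) := by linarith [le_ciInf haε]
  intro hfreq
  obtain ⟨t, hle, hlt⟩ := (hfreq.and_eventually (hlim.eventually (lt_mem_nhds hpos))).exists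
  linarith

lemma norm_rpow_add_norm_rpow_le_of_disjSupp {p : ℝ≥0∞} {f g h : ellp p} (hp : 0 < p.toReal)
    (hfg : DisjSupp f g) (hf : ∀ k, ‖f k‖ ≤ ‖h k‖) (hg : ∀ k, ‖g k‖ ≤ ‖h k‖) :
    ‖f‖ ^ p.toReal + ‖g‖ ^ p.toReal ≤ ‖h‖ ^ p.toReal := by
  have hsf := (lp.memℓp f).summable hp
  have hsg := (lp.memℓp g).summable hp
  rw [lp.norm_rpow_eq_tsum hp, lp.norm_rpow_eq_tsum hp, lp.norm_rpow_eq_tsum hp,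
    ← hsf.tsum_add hsg]
  refine (hsf.add hsg).tsum_le_tsum (fun k => ?_) ((lp.memℓp h).summable hp)
  rcases hfg k with h0 | h0
  · simpa [h0, Real.zero_rpow hp.ne'] using Real.rpow_le_rpow (norm_nonneg _) (hg k) hp.le
  · simpa [h0, Real.zero_rpow hp.ne'] using Real.rpow_le_rpow (norm_nonneg _) (hf k) hp.le

lemma Subvec.apply_eq {p : ℝ≥0∞} {f g : ellp p} (h : Subvec f g) {k : ℕ} (hk : f k ≠ 0) :
    g k = f k := by
  obtain ⟨A, hA⟩ := h
  have hfk := congrFun hA k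
  by_cases hkA : k ∈ A
  · rw [hfk, Set.indicator_of_mem hkA]
  · rw [Set.indicator_of_notMem hkA] at hfk
    exact absurd hfk hk

lemma IsSubvecGLB.apply_eq_of_mem {p : ℝ≥0∞} {φ : List ℕ → ellp p} {C : Set (List ℕ)}
    {g : ellp p} (hg : IsSubvecGLB g (φ '' C)) {ν : List ℕ} (hν : ν ∈ C) {k : ℕ}
    (hk : g k ≠ 0) : φ ν k = g k :=
  (hg.1 _ ⟨ν, hν, rfl⟩).apply_eq hk

lemma IsSubvecGLB.forall_apply_ne_zero {p : ℝ≥0∞} {φ : List ℕ → ellp p} {C : Set (List ℕ)}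
    {g : ellp p} (hg : IsSubvecGLB g (φ '' C)) {k : ℕ} (hk : g k ≠ 0) : ∀ ν ∈ C, φ ν k ≠ 0 :=
  fun _ hν => (hg.apply_eq_of_mem hν hk).symm ▸ hk

lemma IsTree.isPrefix_of_comparable {S : Set (List ℕ)} (hS : IsTree S) {μ ν : List ℕ}
    (hμ : μ ∈ S) (hcomp : μ <+: ν ∨ ν <+: μ) (hdeep : μ.length ≤ ν.length ∨ ¬Nonterminal S ν) :
    μ <+: ν := by
  rcases hcomp with h | ⟨l, rfl⟩
  · exact h
  rcases l with _ | ⟨a, l⟩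
  · simp
  rcases hdeep with hlen | hleaf
  · simp at hlen
  · exact (hleaf ⟨ν ++ [a], hS _ hμ _ ⟨l, by simp⟩, a, rfl⟩).elim

lemma tendsto_length_of_childIn {S : Set (List ℕ)} {β : ℕ → List ℕ}
    (hβ : ∀ t, ChildIn S (β t) (β (t + 1))) : Tendsto (fun t => (β t).length) atTop atTop := by
  refine tendsto_atTop_mono (fun t => ?_) tendsto_id
  induction t with
  | zero => exact Nat.zero_le _
  | succ t ih =>
    obtain ⟨-, m, hm⟩ := hβ t
    simpa [hm] using ih

namespace ANMChain

variable {p : ℝ≥0∞} {S : Set (List ℕ)} {φ : List ℕ → ellp p} {C : Set (List ℕ)}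

lemma exists_mem_le_length_or_terminal (hC : ANMChain p S φ C) (hCne : C.Nonempty) (L : ℕ) :
    ∃ ν ∈ C, L ≤ ν.length ∨ ¬Nonterminal S ν := by
  induction L with
  | zero => exact hCne.imp fun ν hν => ⟨hν, .inl (Nat.zero_le _)⟩
  | succ L ih =>
    obtain ⟨ν, hν, hL | hleaf⟩ := ih
    · by_cases hnt : Nonterminal S ν
      · rcases hL.lt_or_eq with hlt | rfl
        · exact ⟨ν, hν, .inl hlt⟩
        · obtain ⟨ν', hν', ⟨-, m, rfl⟩, -⟩ := hC.2.2 ν hν hnt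
          exact ⟨_, hν', .inl (by simp)⟩
      · exact ⟨ν, hν, .inr hnt⟩
    · exact ⟨ν, hν, .inr hleaf⟩

lemma mem_of_isPrefix_of_isPrefix (hS : IsTree S) (hC : ANMChain p S φ C) {a b c : List ℕ}
    (ha : a ∈ C) (hc : c ∈ C) (hab : a <+: b) (hbc : b <+: c) : b ∈ C := by
  obtain ⟨d, hd⟩ : ∃ d, b.length = a.length + d := ⟨_, (Nat.add_sub_cancel' hab.length_le).symm⟩
  induction d generalizing a with
  | zero => rwa [← hab.eq_of_length (by omega)]
  | succ d ih =>
    obtain ⟨_ | ⟨x, l⟩, rfl⟩ := hab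
    · simp at hd
    have hx : ChildIn S a (a ++ [x]) :=
      ⟨hS _ (hC.1 hc) _ ((List.prefix_append _ l).trans (by simpa using hbc)), x, rfl⟩
    obtain ⟨a', ha', ⟨ha'S, y, rfl⟩, -⟩ := hC.2.2 a ha ⟨_, hx⟩
    have hlen := hbc.length_le
    simp only [List.length_append, List.length_cons] at hd hlen
    have hyc : a ++ [y] <+: c :=
      hS.isPrefix_of_comparable ha'S (hC.2.1 _ ha' c hc) (.inl (by simp; omega))
    exact ih ha' (List.prefix_of_prefix_length_le hyc hbc (by simp)) (by simp; omega)

end ANMChain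

namespace Disintegration

variable {p : ℝ≥0∞} [Fact (1 ≤ p)] {S : Set (List ℕ)} {φ : List ℕ → ellp p}

lemma disjSupp_of_childIn (hφ : Disintegration p S φ) {ν μ μ' : List ℕ}
    (hμ : ChildIn S ν μ) (hμ' : ChildIn S ν μ') (hne : μ ≠ μ') : DisjSupp (φ μ) (φ μ') := by
  obtain ⟨hμS, m, rfl⟩ := hμ
  obtain ⟨hμ'S, m', rfl⟩ := hμ'
  have hincomp {a b : ℕ} (hab : a ≠ b) : ¬ν ++ [a] <+: ν ++ [b] := fun h =>
    hab (by simpa using h.eq_of_length (by simp))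
  have hmm : m ≠ m' := by rintro rfl; exact hne rfl
  exact hφ.separating _ hμS _ hμ'S (hincomp hmm) (hincomp hmm.symm)

lemma hasSum_apply (hφ : Disintegration p S φ) {ν : List ℕ} (hν : ν ∈ S)
    (hnt : Nonterminal S ν) (k : ℕ) :
    HasSum (fun μ : {μ : List ℕ // ChildIn S ν μ} => φ μ.val k) (φ ν k) :=
  (hφ.summative ν hν hnt).mapL (lp.evalCLM ℂ _ p k)

lemma apply_eq_of_childIn (hφ : Disintegration p S φ) {ν μ : List ℕ} (hν : ν ∈ S)
    (hμ : ChildIn S ν μ) {k : ℕ} (hk : φ μ k ≠ 0) : φ μ k = φ ν k := by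
  refine (hasSum_single (⟨μ, hμ⟩ : {μ' // ChildIn S ν μ'}) fun μ' hne => ?_).unique
    (hφ.hasSum_apply hν ⟨μ, hμ⟩ k)
  exact (hφ.disjSupp_of_childIn μ'.2 hμ (fun h => hne (Subtype.ext h)) k).resolve_right hk

lemma exists_childIn_apply_ne_zero (hφ : Disintegration p S φ) {ν : List ℕ} (hν : ν ∈ S)
    (hnt : Nonterminal S ν) {k : ℕ} (hk : φ ν k ≠ 0) : ∃ μ, ChildIn S ν μ ∧ φ μ k ≠ 0 := by
  by_contra! h
  refine hk ((hφ.hasSum_apply hν hnt k).unique ?_)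
  convert hasSum_zero with μ
  exact h μ.1 μ.2

lemma apply_eq_of_isPrefix (hφ : Disintegration p S φ) {ν ν' : List ℕ} (hν' : ν' ∈ S)
    (hpre : ν <+: ν') {k : ℕ} (hk : φ ν' k ≠ 0) : φ ν' k = φ ν k := by
  obtain ⟨l, rfl⟩ := hpre
  induction l using List.reverseRecOn with
  | nil => simp
  | append_singleton l m ih =>
    have hmid : ν ++ l ∈ S := hφ.tree _ hν' _ ⟨[m], by simp⟩
    have hchild : φ (ν ++ (l ++ [m])) k = φ (ν ++ l) k :=
      hφ.apply_eq_of_childIn hmid ⟨hν', m, by simp⟩ hk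
    rw [hchild] at hk ⊢
    exact ih hmid hk

lemma apply_ne_zero_of_isPrefix (hφ : Disintegration p S φ) {ν ν' : List ℕ} (hν' : ν' ∈ S)
    (hpre : ν <+: ν') {k : ℕ} (hk : φ ν' k ≠ 0) : φ ν k ≠ 0 :=
  hφ.apply_eq_of_isPrefix hν' hpre hk ▸ hk

lemma comparable_of_apply_ne_zero (hφ : Disintegration p S φ) {ν ν' : List ℕ} (hν : ν ∈ S)
    (hν' : ν' ∈ S) {k : ℕ} (hk : φ ν k ≠ 0) (hk' : φ ν' k ≠ 0) : ν <+: ν' ∨ ν' <+: ν := by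
  by_contra! h
  exact (hφ.separating ν hν ν' hν' h.1 h.2 k).elim hk hk'

lemma exists_apply_ne_zero (hφ : Disintegration p S φ) (k : ℕ) : ∃ ν ∈ S, φ ν k ≠ 0 := by
  by_contra! h
  have hev : lp.evalCLM ℂ _ p k = 0 :=
    ContinuousLinearMap.ext_on hφ.dense (by rintro _ ⟨ν, hν, rfl⟩; exact h ν hν)
  simpa [lp.evalCLM] using congr($hev (lp.single p k 1))

lemma norm_apply_le_of_childIn (hφ : Disintegration p S φ) {ν μ : List ℕ} (hν : ν ∈ S)
    (hμ : ChildIn S ν μ) (k : ℕ) : ‖φ μ k‖ ≤ ‖φ ν k‖ := by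
  by_cases hk : φ μ k = 0
  · simp [hk]
  · rw [hφ.apply_eq_of_childIn hν hμ hk]

lemma exists_branch (hφ : Disintegration p S φ) {j : ℕ}
    (hleaf : ∀ ν ∈ S, φ ν j ≠ 0 → Nonterminal S ν) :
    ∃ c ≠ 0, ∃ β : ℕ → List ℕ, ∀ t, (β t ∈ S ∧ φ (β t) j = c) ∧ ChildIn S (β t) (β (t + 1)) := by
  obtain ⟨ν₀, hν₀, h₀⟩ := hφ.exists_apply_ne_zero j
  refine ⟨φ ν₀ j, h₀, exists_seq_of_forall_exists (P := fun ν => ν ∈ S ∧ φ ν j = φ ν₀ j)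
    (fun ν ⟨hν, hνj⟩ => ?_) ⟨hν₀, rfl⟩⟩
  obtain ⟨μ, hμ, hμj⟩ := hφ.exists_childIn_apply_ne_zero hν (hleaf ν hν (hνj ▸ h₀)) (hνj ▸ h₀)
  exact ⟨μ, hμ, hμ.1, (hφ.apply_eq_of_childIn hν hμ hμj).trans hνj⟩

end Disintegration

namespace ANMChain

variable {p : ℝ≥0∞} [Fact (1 ≤ p)] {S : Set (List ℕ)} {φ : List ℕ → ellp p} {C : Set (List ℕ)}

lemma two_mul_norm_rpow_le (hφ : Disintegration p S φ) (hptop : p ≠ ∞) (hC : ANMChain p S φ C)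
    {ν μ : List ℕ} (hν : ν ∈ C) (hμ : ChildIn S ν μ) (hμC : μ ∉ C) :
    2 * ‖φ μ‖ ^ p.toReal ≤ ‖φ ν‖ ^ p.toReal + 2⁻¹ ^ ν.length := by
  obtain ⟨ν', hν', hν'ν, hmax⟩ := hC.2.2 ν hν ⟨μ, hμ⟩
  have hp : 0 < p.toReal := ENNReal.toReal_pos (zero_lt_one.trans_le Fact.out).ne' hptop
  have hsum := norm_rpow_add_norm_rpow_le_of_disjSupp hp
    (hφ.disjSupp_of_childIn hν'ν hμ (ne_of_mem_of_not_mem hν' hμC))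
    (hφ.norm_apply_le_of_childIn (hC.1 hν) hν'ν) (hφ.norm_apply_le_of_childIn (hC.1 hν) hμ)
  have hμν' := hmax μ hμ
  rw [zpow_neg, zpow_natCast, ← inv_pow] at hμν'
  linarith

lemma exists_mem_isPrefix (hφ : Disintegration p S φ) (hC : ANMChain p S φ C)
    (hCne : C.Nonempty) {k : ℕ} (hCk : ∀ μ ∈ C, φ μ k ≠ 0) {ν : List ℕ} (hν : ν ∈ S)
    (hνk : φ ν k ≠ 0) : ∃ μ ∈ C, ν <+: μ := by
  obtain ⟨μ, hμ, hdeep⟩ := hC.exists_mem_le_length_or_terminal hCne ν.length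
  exact ⟨μ, hμ, hφ.tree.isPrefix_of_comparable hν
    (hφ.comparable_of_apply_ne_zero hν (hC.1 hμ) hνk (hCk μ hμ)) hdeep⟩

lemma mem_of_isPrefix_of_apply_ne_zero (hφ : Disintegration p S φ) (hC : ANMChain p S φ C)
    {k : ℕ} (hCk : ∀ μ ∈ C, φ μ k ≠ 0) {a b : List ℕ} (ha : a ∈ C) (hab : a <+: b)
    (hb : b ∈ S) (hbk : φ b k ≠ 0) : b ∈ C := by
  obtain ⟨c, hc, hbc⟩ := hC.exists_mem_isPrefix hφ ⟨a, ha⟩ hCk hb hbk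
  exact hC.mem_of_isPrefix_of_isPrefix hφ.tree ha hc hab hbc

lemma subsingleton_support_glb (hφ : Disintegration p S φ) (hC : ANMChain p S φ C)
    (hCne : C.Nonempty) {g : ellp p} (hg : IsSubvecGLB g (φ '' C)) :
    {m | g m ≠ 0}.Subsingleton := by
  have hval : ∀ ν ∈ S, ∀ {k k'}, g k ≠ 0 → g k' ≠ 0 → φ ν k ≠ 0 → φ ν k' = g k' := by
    intro ν hν k k' hk hk' hνk
    obtain ⟨μ, hμ, hνμ⟩ := hC.exists_mem_isPrefix hφ hCne (hg.forall_apply_ne_zero hk) hν hνk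
    rw [← hφ.apply_eq_of_isPrefix (hC.1 hμ) hνμ (hg.forall_apply_ne_zero hk' μ hμ)]
    exact hg.apply_eq_of_mem hμ hk'
  intro j hj m hm
  by_contra hjm
  set T : ellp p →L[ℂ] ℂ := g m • lp.evalCLM ℂ _ p j - g j • lp.evalCLM ℂ _ p m
  have hT : T = 0 := by
    refine ContinuousLinearMap.ext_on hφ.dense ?_
    rintro _ ⟨ν, hν, rfl⟩
    by_cases h : φ ν j = 0 ∧ φ ν m = 0
    · simp [T, lp.evalCLM, h.1, h.2]
    · obtain ⟨k, hk, hνk⟩ : ∃ k, g k ≠ 0 ∧ φ ν k ≠ 0 := by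
        rcases not_and_or.1 h with h | h
        exacts [⟨j, hj, h⟩, ⟨m, hm, h⟩]
      simp [T, lp.evalCLM, hval ν hν hk hj hνk, hval ν hν hk hm hνk, mul_comm]
  have hTj := congr($hT (lp.single p j 1))
  simp [T, lp.evalCLM, Ne.symm hjm] at hTj
  exact hm hTj

end ANMChain

lemma IsSubvecGLB.apply_ne_zero {p : ℝ≥0∞} [Fact (1 ≤ p)] {S : Set (List ℕ)}
    {φ : List ℕ → ellp p} (hφ : Disintegration p S φ) {C : Set (List ℕ)} (hCS : C ⊆ S)
    (hC : PrefixChain C) {ν₀ : List ℕ} (hν₀ : ν₀ ∈ C) {g : ellp p} (hg : IsSubvecGLB g (φ '' C))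
    {k : ℕ} (hCk : ∀ ν ∈ C, φ ν k ≠ 0) : g k ≠ 0 := by
  have hval : ∀ ν ∈ C, φ ν k = φ ν₀ k := by
    intro ν hν
    rcases hC ν hν ν₀ hν₀ with h | h
    · exact (hφ.apply_eq_of_isPrefix (hCS hν₀) h (hCk ν₀ hν₀)).symm
    · exact hφ.apply_eq_of_isPrefix (hCS hν) h (hCk ν hν)
  have hsub : ∀ h ∈ φ '' C, Subvec (lp.single p k (φ ν₀ k)) h := by
    rintro _ ⟨ν, hν, rfl⟩
    refine ⟨{k}, funext fun m => ?_⟩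
    by_cases hm : m = k
    · subst hm
      simp [hval ν hν]
    · simp [hm]
  have hgk := (hg.2 _ hsub).apply_eq (k := k) (by simpa using hCk ν₀ hν₀)
  simpa [hgk] using hCk ν₀ hν₀

namespace Disintegration

variable {p : ℝ≥0∞} [Fact (1 ≤ p)] {S : Set (List ℕ)} {φ : List ℕ → ellp p}
  {C : ℕ → Set (List ℕ)}

lemma eq_of_forall_apply_ne_zero (hφ : Disintegration p S φ) (hanm : ∀ n, ANMChain p S φ (C n))
    (hne : ∀ n, (C n).Nonempty) (hpart : ∀ ν ∈ S, ∃! n : ℕ, ν ∈ C n) {j m n : ℕ}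
    (hm : ∀ μ ∈ C m, φ μ j ≠ 0) (hn : ∀ μ ∈ C n, φ μ j ≠ 0) : m = n := by
  obtain ⟨a, ha⟩ := hne m
  obtain ⟨b, hb⟩ := hne n
  have haS := (hanm m).1 ha
  have hbS := (hanm n).1 hb
  rcases hφ.comparable_of_apply_ne_zero haS hbS (hm a ha) (hn b hb) with hab | hba
  · exact (hpart b hbS).unique
      ((hanm m).mem_of_isPrefix_of_apply_ne_zero hφ hm ha hab hbS (hn b hb)) hb
  · exact (hpart a haS).unique ha
      ((hanm n).mem_of_isPrefix_of_apply_ne_zero hφ hn hb hba haS (hm a ha))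

lemma exists_eventually_mem_of_branch (hφ : Disintegration p S φ) (hptop : p ≠ ∞)
    (hanm : ∀ n, ANMChain p S φ (C n)) (hpart : ∀ ν ∈ S, ∃! n : ℕ, ν ∈ C n) {j : ℕ} {c : ℂ}
    (hc : c ≠ 0) {β : ℕ → List ℕ}
    (hβ : ∀ t, (β t ∈ S ∧ φ (β t) j = c) ∧ ChildIn S (β t) (β (t + 1))) :
    ∃ n, ∀ᶠ t in atTop, β t ∈ C n := by
  have hp : 0 < p.toReal := ENNReal.toReal_pos (zero_lt_one.trans_le Fact.out).ne' hptop
  have hanti : Antitone fun t => ‖φ (β t)‖ ^ p.toReal := antitone_nat_of_succ_le fun t =>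
    Real.rpow_le_rpow (norm_nonneg _)
      (lp.norm_mono (zero_lt_one.trans_le Fact.out).ne'
        (hφ.norm_apply_le_of_childIn (hβ t).1.1 (hβ t).2)) hp.le
  have hbound : ∀ t, ‖c‖ ^ p.toReal ≤ ‖φ (β t)‖ ^ p.toReal := fun t =>
    (hβ t).1.2 ▸ Real.rpow_le_rpow (norm_nonneg _)
      (lp.norm_apply_le_norm (zero_lt_one.trans_le Fact.out).ne' _ j) hp.le
  have hδ : Tendsto (fun t => (2⁻¹ : ℝ) ^ (β t).length) atTop (𝓝 0) :=
    (tendsto_pow_atTop_nhds_zero_of_lt_one (by norm_num) (by norm_num)).comp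
      (tendsto_length_of_childIn fun t => (hβ t).2)
  have hstay : ∀ᶠ t in atTop, ∃ n, β t ∈ C n ∧ β (t + 1) ∈ C n := by
    refine (not_frequently.1 (not_frequently_two_mul_le_add hanti (by positivity) hbound hδ)).mono
      fun t ht => ?_
    by_contra! hswitch
    obtain ⟨n, hn⟩ := (hpart _ (hβ t).1.1).exists
    exact ht ((hanm n).two_mul_norm_rpow_le hφ hptop hn (hβ t).2 (hswitch n hn))
  obtain ⟨t₀, ht₀⟩ := eventually_atTop.1 hstay
  obtain ⟨n, hn, -⟩ := ht₀ t₀ le_rfl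
  refine ⟨n, eventually_atTop.2 ⟨t₀, fun t ht => ?_⟩⟩
  induction t, ht using Nat.le_induction with
  | base => exact hn
  | succ t ht ih =>
    obtain ⟨m, hm, hm'⟩ := ht₀ t ht
    rwa [(hpart _ (hβ t).1.1).unique ih hm]

lemma exists_forall_apply_ne_zero (hφ : Disintegration p S φ) (hptop : p ≠ ∞)
    (hanm : ∀ n, ANMChain p S φ (C n)) (hpart : ∀ ν ∈ S, ∃! n : ℕ, ν ∈ C n) (j : ℕ) :
    ∃ n, ∀ μ ∈ C n, φ μ j ≠ 0 := by
  by_cases hleaf : ∃ τ ∈ S, φ τ j ≠ 0 ∧ ¬Nonterminal S τ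
  · obtain ⟨τ, hτS, hτj, hτ⟩ := hleaf
    obtain ⟨n, hn⟩ := (hpart τ hτS).exists
    refine ⟨n, fun μ hμ => hφ.apply_ne_zero_of_isPrefix hτS ?_ hτj⟩
    exact hφ.tree.isPrefix_of_comparable ((hanm n).1 hμ) ((hanm n).2.1 μ hμ τ hn) (.inr hτ)
  · push Not at hleaf
    obtain ⟨c, hc, β, hβ⟩ := hφ.exists_branch hleaf
    obtain ⟨n, hn⟩ := hφ.exists_eventually_mem_of_branch hptop hanm hpart hc hβ
    refine ⟨n, fun μ hμ => ?_⟩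
    have hdeep := (tendsto_length_of_childIn fun t => (hβ t).2).eventually_ge_atTop μ.length
    obtain ⟨t, htn, ht⟩ := (hn.and hdeep).exists
    refine hφ.apply_ne_zero_of_isPrefix (hβ t).1.1 ?_ ((hβ t).1.2 ▸ hc)
    exact hφ.tree.isPrefix_of_comparable ((hanm n).1 hμ) ((hanm n).2.1 μ hμ _ htn) (.inl ht)

end Disintegration

theorem stmt_11_general (p : ℝ≥0∞) [Fact (1 ≤ p)] (hptop : p ≠ ∞)
    (S : Set (List ℕ)) (φ : List ℕ → ellp p) (hφ : Disintegration p S φ)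
    (C : ℕ → Set (List ℕ)) (hanm : ∀ n, ANMChain p S φ (C n))
    (hne : ∀ n, (C n).Nonempty)
    (hpart : ∀ ν ∈ S, ∃! n : ℕ, ν ∈ C n)
    (g : ℕ → ellp p) (hg : ∀ n, IsSubvecGLB (g n) (φ '' C n)) :
    (∀ m n, m ≠ n → DisjSupp (g m) (g n)) ∧
    ∀ j : ℕ, ∃! n : ℕ, {m : ℕ | g n m ≠ 0} = {j} := by
  refine ⟨fun m n hmn j => ?_, fun j => ?_⟩
  · by_contra! h
    exact hmn (hφ.eq_of_forall_apply_ne_zero hanm hne hpart ((hg m).forall_apply_ne_zero h.1)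
      ((hg n).forall_apply_ne_zero h.2))
  · obtain ⟨n, hn⟩ := hφ.exists_forall_apply_ne_zero hptop hanm hpart j
    obtain ⟨ν, hν⟩ := hne n
    have hgj : g n j ≠ 0 := (hg n).apply_ne_zero hφ (hanm n).1 (hanm n).2.1 hν hn
    refine ⟨n, ((hanm n).subsingleton_support_glb hφ (hne n) (hg n)).eq_singleton_of_mem hgj,
      fun n' hn' => ?_⟩
    have hgj' : g n' j ≠ 0 := (Set.ext_iff.1 hn' j).2 rfl
    exact hφ.eq_of_forall_apply_ne_zero hanm hne hpart ((hg n').forall_apply_ne_zero hgj') hn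

/-- for a partition of the domain of a disintegration into almost
norm-maximizing chains, the infima are pairwise disjointly supported, and each
singleton `{j}` is the support of exactly one of them. -/
theorem stmt_11 (p : ℝ≥0∞) [Fact (1 ≤ p)] (hptop : p ≠ ∞) (hp2 : p ≠ 2)
    (S : Set (List ℕ)) (φ : List ℕ → ellp p) (hφ : Disintegration p S φ)
    (C : ℕ → Set (List ℕ)) (hanm : ∀ n, ANMChain p S φ (C n))
    (hne : ∀ n, (C n).Nonempty)
    (hpart : ∀ ν ∈ S, ∃! n : ℕ, ν ∈ C n)
    (g : ℕ → ellp p) (hg : ∀ n, IsSubvecGLB (g n) (φ '' C n)) :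
    (∀ m n, m ≠ n → DisjSupp (g m) (g n)) ∧
    ∀ j : ℕ, ∃! n : ℕ, {m : ℕ | g n m ≠ 0} = {j} :=
  stmt_11_general p hptop S φ hφ C hanm hne hpart g hg
end
end
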